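/- arXiv:1907.13402 — 4 statements merged into one kernel-verified Lean document; each statement's English description precedes it below -/
import Mathlib

section
/- Let X be a real Hilbert space and A, B nonempty closed convex subsets of X. Let {A_n} and {B_n} be sequences of nonempty closed convex subsets of X such that A_n → A and B_n → B in the Attouch-Wets sense. Suppose there exist y ∈ A ∩ B and a continuous linear functional f ∈ S_{X*} such that inf f(B) = f(y) = sup f(A) and f strongly exposes A at y. Then for every starting point a₀ ∈ X, the perturbed alternating projections sequences {a_n} and {b_n} (w.r.t. {A_n} and {B_n}, with starting point a₀) converge in norm to y. -/
open Filter Metric Topology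

/-- Attouch–Wets convergence of a sequence of sets:
for every `N`, `sup_{‖x‖ ≤ N} |dist(x, Aₙ) − dist(x, L)| → 0`. -/
def AWTendsto {X : Type*} [NormedAddCommGroup X] (A : ℕ → Set X) (L : Set X) : Prop :=
  ∀ N : ℕ, ∀ ε : ℝ, 0 < ε → ∃ n₀ : ℕ, ∀ n ≥ n₀, ∀ x : X, ‖x‖ ≤ (N : ℝ) →
    |Metric.infDist x (A n) - Metric.infDist x L| < ε

/-- `p` is a metric projection (nearest point) of `x` onto `K`. -/
def IsProjOn {X : Type*} [NormedAddCommGroup X] (K : Set X) (x p : X) : Prop :=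
  p ∈ K ∧ ∀ y ∈ K, dist x p ≤ dist x y

/-- `a`, `b` are the perturbed alternating projections sequences w.r.t. `A`, `B`
with starting point `a₀`: `bₙ = P_{Bₙ}(a_{n−1})` and `aₙ = P_{Aₙ}(bₙ)` for `n ≥ 1`. -/
def IsPerturbedAPS {X : Type*} [NormedAddCommGroup X]
    (A B : ℕ → Set X) (a₀ : X) (a b : ℕ → X) : Prop :=
  a 0 = a₀ ∧ ∀ n : ℕ,
    IsProjOn (B (n + 1)) (a n) (b (n + 1)) ∧ IsProjOn (A (n + 1)) (b (n + 1)) (a (n + 1))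

/-- `f` strongly exposes `A` at `a`: `f(a) = sup f(A)` and every sequence in `A` whose
`f`-values tend to `sup f(A)` converges in norm to `a`. -/
def StronglyExposes {X : Type*} [NormedAddCommGroup X] [NormedSpace ℝ X]
    (f : X →L[ℝ] ℝ) (A : Set X) (a : X) : Prop :=
  a ∈ A ∧ (∀ x ∈ A, f x ≤ f a) ∧
    ∀ x : ℕ → X, (∀ n, x n ∈ A) → Tendsto (fun n => f (x n)) atTop (nhds (f a)) →
      Tendsto x atTop (nhds a)

/-! For the projection `p` of `x` onto a convex set `K` and any `c ∈ K`,
`‖p - y‖² + ‖x - p‖² / 2 ≤ ‖x - y‖² + 2 ‖c - y‖²`. Since `y` is a limit of points of `Aₙ` and of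
`Bₙ`, a full step therefore decreases `‖aₙ - y‖²` by `‖aₙ - bₙ₊₁‖² / 2` up to an error tending to
`0`, and it suffices to bound `‖aₙ - bₙ₊₁‖ ≥ f bₙ₊₁ - f aₙ` from below while `‖aₙ - y‖ ≥ η`.

Strong exposure gives `f ≤ f y - δ` on the points of `A` at distance `≥ η / 4` from `y`. By
Attouch–Wets convergence this passes to the points of `Aₙ` on a small sphere about a point `q ∈ Aₙ`
near `y`, and concavity of `f` along segments from `q` in the convex set `Aₙ` turns it into the
cone bound `f ≤ f y - κ ‖· - y‖` on all of `Aₙ` outside the `η`-ball, so no a priori bound on the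
iterates is needed. Likewise `f ≥ f y - ε (1 + ‖· - y‖)` on `Bₙ` for every `ε > 0` and large `n`. -/

section Projection

variable {X : Type*} [NormedAddCommGroup X] [InnerProductSpace ℝ X] {K : Set X} {x p c : X}

theorem IsProjOn.inner_sub_sub_nonpos (h : IsProjOn K x p) (hK : Convex ℝ K) (hc : c ∈ K) :
    inner ℝ (x - p) (c - p) ≤ 0 := by
  have : Nonempty K := ⟨⟨p, h.1⟩⟩
  refine (norm_eq_iInf_iff_real_inner_le_zero hK h.1).1 (le_antisymm ?_ ?_) c hc
  · exact le_ciInf fun w => by simpa [dist_eq_norm] using h.2 w w.2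
  · exact ciInf_le ⟨0, by rintro r ⟨w, rfl⟩; exact norm_nonneg _⟩ (⟨p, h.1⟩ : K)

theorem IsProjOn.sq_norm_sub_add_le (h : IsProjOn K x p) (hK : Convex ℝ K) (hc : c ∈ K) (v : X) :
    ‖p - v‖ ^ 2 + ‖x - p‖ ^ 2 / 2 ≤ ‖x - v‖ ^ 2 + 2 * ‖c - v‖ ^ 2 := by
  have hobtuse := h.inner_sub_sub_nonpos hK hc
  have hexpand : ‖x - v‖ ^ 2 = ‖x - p‖ ^ 2 + 2 * inner ℝ (x - p) (p - v) + ‖p - v‖ ^ 2 := by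
    rw [← norm_add_sq_real, sub_add_sub_cancel]
  have hsplit : inner ℝ (x - p) (p - v) = -inner ℝ (x - p) (c - p) + inner ℝ (x - p) (c - v) := by
    rw [← inner_neg_right, ← inner_add_right, neg_sub, sub_add_sub_cancel]
  have hcs := neg_le_of_abs_le (abs_real_inner_le_norm (x - p) (c - v))
  nlinarith [sq_nonneg (‖x - p‖ - 2 * ‖c - v‖)]

theorem IsProjOn.norm_sub_le_of_mem (h : IsProjOn K x p) (hK : Convex ℝ K) (hc : c ∈ K) :
    ‖p - c‖ ≤ ‖x - c‖ := by
  have := h.sq_norm_sub_add_le hK hc c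
  rw [sub_self, norm_zero] at this
  nlinarith [norm_nonneg (p - c), norm_nonneg (x - c)]

theorem IsProjOn.norm_sub_le_add (h : IsProjOn K x p) (hK : Convex ℝ K) (hc : c ∈ K) (v : X) :
    ‖p - v‖ ≤ ‖x - v‖ + 2 * ‖c - v‖ :=
  calc ‖p - v‖ ≤ ‖p - c‖ + ‖c - v‖ := norm_sub_le_norm_sub_add_norm_sub p c v
    _ ≤ ‖x - c‖ + ‖c - v‖ := by gcongr; exact h.norm_sub_le_of_mem hK hc
    _ ≤ ‖x - v‖ + 2 * ‖c - v‖ := by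
      linarith [norm_sub_le_norm_sub_add_norm_sub x v c, norm_sub_rev v c]

end Projection

section Cone

variable {E : Type*} [NormedAddCommGroup E] [NormedSpace ℝ E]

theorem ConcaveOn.le_add_mul_div_of_forall_norm_sub_eq {C : Set E} {g : E → ℝ}
    (hg : ConcaveOn ℝ C g) {q p : E} (hq : q ∈ C) (hp : p ∈ C) {r c : ℝ} (hr : 0 < r)
    (hrp : r ≤ ‖p - q‖) (hsphere : ∀ x ∈ C, ‖x - q‖ = r → g x ≤ g q + c) :
    g p ≤ g q + c * (‖p - q‖ / r) := by
  have hpq : 0 < ‖p - q‖ := hr.trans_le hrp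
  set t := r / ‖p - q‖
  have ht : 0 < t := div_pos hr hpq
  have ht1 : 0 ≤ 1 - t := sub_nonneg.2 ((div_le_one hpq).2 hrp)
  have hdist : ‖(1 - t) • q + t • p - q‖ = r := by
    rw [show (1 - t) • q + t • p - q = t • (p - q) by module, norm_smul, Real.norm_of_nonneg ht.le,
      div_mul_cancel₀ _ hpq.ne']
  have hchord := hg.2 hq hp ht1 ht.le (sub_add_cancel 1 t)
  have hsph := hsphere _ (hg.1 hq hp ht1 ht.le (sub_add_cancel 1 t)) hdist
  rw [smul_eq_mul, smul_eq_mul] at hchord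
  have hslope : t * (g p - g q) ≤ c := by linarith
  have hinv : t * (‖p - q‖ / r) = 1 := by simp only [t]; field_simp
  calc g p = g q + t * (g p - g q) * (‖p - q‖ / r) := by linear_combination -(g p - g q) * hinv
    _ ≤ g q + c * (‖p - q‖ / r) := by gcongr

theorem ContinuousLinearMap.apply_sub_apply_le (f : E →L[ℝ] ℝ) (hf : ‖f‖ ≤ 1) (u v : E) :
    f u - f v ≤ ‖u - v‖ := by
  rw [← map_sub]
  exact (le_abs_self _).trans ((f.le_of_opNorm_le hf _).trans_eq (one_mul _))

end Cone

section AttouchWets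

variable {X : Type*} [NormedAddCommGroup X] {An : ℕ → Set X} {A : Set X} {ε : ℝ}

theorem AWTendsto.eventually_abs_infDist_sub_lt (hAW : AWTendsto An A) (R : ℝ) (hε : 0 < ε) :
    ∀ᶠ n in atTop, ∀ x, ‖x‖ ≤ R → |infDist x (An n) - infDist x A| < ε := by
  obtain ⟨n₀, h⟩ := hAW ⌈R⌉₊ ε hε
  exact eventually_atTop.2 ⟨n₀, fun n hn x hx => h n hn x (hx.trans (Nat.le_ceil R))⟩

theorem AWTendsto.eventually_exists_norm_sub_lt (hAW : AWTendsto An A)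
    (hne : ∀ n, (An n).Nonempty) {y : X} (hy : y ∈ A) (hε : 0 < ε) :
    ∀ᶠ n in atTop, ∃ q ∈ An n, ‖q - y‖ < ε := by
  filter_upwards [hAW.eventually_abs_infDist_sub_lt ‖y‖ hε] with n hn
  have h := hn y le_rfl
  rw [infDist_zero_of_mem hy, sub_zero, abs_of_nonneg infDist_nonneg] at h
  obtain ⟨q, hq, hqy⟩ := (infDist_lt_iff (hne n)).1 h
  exact ⟨q, hq, by rwa [dist_comm, dist_eq_norm] at hqy⟩

theorem AWTendsto.eventually_forall_exists_norm_sub_lt (hAW : AWTendsto An A) (hA : A.Nonempty)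
    (R : ℝ) (hε : 0 < ε) : ∀ᶠ n in atTop, ∀ p ∈ An n, ‖p‖ ≤ R → ∃ p' ∈ A, ‖p - p'‖ < ε := by
  filter_upwards [hAW.eventually_abs_infDist_sub_lt R hε] with n hn p hp hpR
  have h := hn p hpR
  rw [infDist_zero_of_mem hp, zero_sub, abs_neg, abs_of_nonneg infDist_nonneg] at h
  obtain ⟨p', hp', hpp'⟩ := (infDist_lt_iff hA).1 h
  exact ⟨p', hp', by rwa [dist_eq_norm] at hpp'⟩

end AttouchWets

section ConeBounds

variable {X : Type*} [NormedAddCommGroup X] [NormedSpace ℝ X] {A : Set X} {An : ℕ → Set X}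
  {y : X} {f : X →L[ℝ] ℝ} {η : ℝ}

theorem StronglyExposes.exists_le_sub (hexp : StronglyExposes f A y) (hη : 0 < η) :
    ∃ δ > 0, ∀ x ∈ A, η ≤ ‖x - y‖ → f x ≤ f y - δ := by
  by_contra! h
  choose x hxA hxη hfx using fun k : ℕ => h (1 / (k + 1)) Nat.one_div_pos_of_nat
  have hlim : Tendsto (fun k => f (x k)) atTop (𝓝 (f y)) :=
    tendsto_of_tendsto_of_tendsto_of_le_of_le
      (by simpa using tendsto_const_nhds.sub (tendsto_one_div_add_atTop_nhds_zero_nat (𝕜 := ℝ)))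
      tendsto_const_nhds (fun k => (hfx k).le) (fun k => hexp.2.1 _ (hxA k))
  obtain ⟨k, hk⟩ := ((hexp.2.2 x hxA hlim).eventually (ball_mem_nhds y hη)).exists
  exact (hxη k).not_gt (by rwa [dist_eq_norm] at hk)

theorem AWTendsto.exists_eventually_apply_le_sub_mul (hAW : AWTendsto An A)
    (hAv : ∀ n, Convex ℝ (An n)) (hyAn : ∀ ε > 0, ∀ᶠ n in atTop, ∃ q ∈ An n, ‖q - y‖ < ε)
    (hexp : StronglyExposes f A y) (hf : ‖f‖ ≤ 1) (hη : 0 < η) :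
    ∃ κ > 0, ∀ᶠ n in atTop, ∀ p ∈ An n, η ≤ ‖p - y‖ → f p ≤ f y - κ * ‖p - y‖ := by
  obtain ⟨δ, hδ, hslice⟩ := hexp.exists_le_sub (η := η / 4) (by positivity)
  set ε := min (η / 8) (δ / 4)
  have hε : 0 < ε := by positivity
  have hεη : ε ≤ η / 8 := min_le_left _ _
  have hεδ : ε ≤ δ / 4 := min_le_right _ _
  set D := δ / η
  have hDη : D * η = δ := div_mul_cancel₀ δ hη.ne'
  refine ⟨D / 2, by positivity, ?_⟩
  filter_upwards [hyAn ε hε,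
    hAW.eventually_forall_exists_norm_sub_lt ⟨y, hexp.1⟩ (‖y‖ + η) hε] with n ⟨q, hq, hqy⟩ hnear
  intro p hp hpy
  have hsphere : ∀ x ∈ An n, ‖x - q‖ = η / 2 → f x ≤ f q + -(δ / 2) := by
    intro x hx hxq
    have hxR : ‖x‖ ≤ ‖y‖ + η := by
      linarith [norm_le_norm_add_norm_sub' x q, norm_le_norm_add_norm_sub' q y]
    obtain ⟨x', hx', hxx'⟩ := hnear x hx hxR
    have hx'y : η / 4 ≤ ‖x' - y‖ := by
      linarith [norm_sub_le_norm_sub_add_norm_sub x x' q, norm_sub_le_norm_sub_add_norm_sub x' y q,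
        norm_sub_rev q y]
    linarith [hslice x' hx' hx'y, f.apply_sub_apply_le hf x x', f.apply_sub_apply_le hf y q,
      norm_sub_rev y q]
  have hpq : η / 2 ≤ ‖p - q‖ := by
    linarith [norm_sub_le_norm_sub_add_norm_sub p q y, norm_sub_rev q y]
  have hcone := ((f : X →ₗ[ℝ] ℝ).concaveOn (hAv n)).le_add_mul_div_of_forall_norm_sub_eq hq hp
    (by positivity) hpq hsphere
  simp only [ContinuousLinearMap.coe_coe] at hcone
  have hcone' : f p ≤ f q - D * ‖p - q‖ :=
    hcone.trans_eq (by simp only [D]; field_simp; ring)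
  have h1 : D * (‖p - y‖ - ε) ≤ D * ‖p - q‖ := by
    gcongr; linarith [norm_sub_le_norm_sub_add_norm_sub p q y, norm_sub_rev q y]
  have h2 : D * ε ≤ D * (η / 8) := by gcongr
  have h3 : D * η ≤ D * ‖p - y‖ := by gcongr
  linarith [f.apply_sub_apply_le hf q y]

theorem AWTendsto.eventually_sub_mul_le_apply {B : Set X} {Bn : ℕ → Set X} (hBW : AWTendsto Bn B)
    (hBv : ∀ n, Convex ℝ (Bn n)) (hyBn : ∀ ε > 0, ∀ᶠ n in atTop, ∃ q ∈ Bn n, ‖q - y‖ < ε)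
    (hyB : y ∈ B) (hinf : ∀ x ∈ B, f y ≤ f x) (hf : ‖f‖ ≤ 1) {ε : ℝ} (hε : 0 < ε) :
    ∀ᶠ n in atTop, ∀ p ∈ Bn n, f y - ε * (1 + ‖p - y‖) ≤ f p := by
  set ε' := min (ε / 5) 1
  have hε' : 0 < ε' := by positivity
  have hε'ε : ε' ≤ ε / 5 := min_le_left _ _
  have hε'1 : ε' ≤ 1 := min_le_right _ _
  filter_upwards [hyBn ε' hε',
    hBW.eventually_forall_exists_norm_sub_lt ⟨y, hyB⟩ (‖y‖ + 2) hε'] with n ⟨q, hq, hqy⟩ hnear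
  intro p hp
  have hball : ∀ x ∈ Bn n, ‖x - q‖ ≤ 1 → f q - 2 * ε' ≤ f x := by
    intro x hx hxq
    have hxR : ‖x‖ ≤ ‖y‖ + 2 := by
      linarith [norm_le_norm_add_norm_sub' x q, norm_le_norm_add_norm_sub' q y]
    obtain ⟨x', hx', hxx'⟩ := hnear x hx hxR
    linarith [hinf x' hx', f.apply_sub_apply_le hf x' x, norm_sub_rev x' x,
      f.apply_sub_apply_le hf q y]
  have hfp : f q - 2 * ε' * (1 + ‖p - q‖) ≤ f p := by
    rcases le_or_gt ‖p - q‖ 1 with hpq | hpq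
    · nlinarith [hball p hp hpq, norm_nonneg (p - q)]
    · have hcone := (((f : X →ₗ[ℝ] ℝ).convexOn (hBv n)).neg).le_add_mul_div_of_forall_norm_sub_eq
        hq hp one_pos hpq.le (c := 2 * ε') fun x hx hxq => by
          simp only [Pi.neg_apply, ContinuousLinearMap.coe_coe]; linarith [hball x hx hxq.le]
      simp only [Pi.neg_apply, ContinuousLinearMap.coe_coe, div_one] at hcone
      linarith
  have hpq : ‖p - q‖ ≤ ‖p - y‖ + 1 := by
    linarith [norm_sub_le_norm_sub_add_norm_sub p y q, norm_sub_rev y q]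
  have h1 : 2 * ε' * (1 + ‖p - q‖) ≤ 2 * ε' * (2 + ‖p - y‖) :=
    mul_le_mul_of_nonneg_left (by linarith) (by positivity)
  have h2 : ε' * ‖p - y‖ ≤ ε / 5 * ‖p - y‖ := by gcongr
  linarith [f.apply_sub_apply_le hf y q, norm_sub_rev y q, mul_nonneg hε.le (norm_nonneg (p - y))]

end ConeBounds

theorem eventually_le_add_of_descent {u : ℕ → ℝ} {θ s c : ℝ} (hu : ∀ n, 0 ≤ u n) (hs : 0 ≤ s)
    (hc : 0 < c) (hstep : ∀ᶠ n in atTop, u (n + 1) ≤ u n + s)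
    (hdesc : ∀ᶠ n in atTop, θ ≤ u n → u (n + 1) + c ≤ u n) :
    ∀ᶠ n in atTop, u n ≤ θ + s := by
  obtain ⟨N, hN⟩ := eventually_atTop.1 (hstep.and hdesc)
  obtain ⟨m, hNm, hm⟩ : ∃ m ≥ N, u m < θ := by
    by_contra! h
    have hdecr : ∀ k : ℕ, u (N + k) + k * c ≤ u N := by
      intro k
      induction k with
      | zero => simp
      | succ k ih =>
        have := (hN (N + k) (by omega)).2 (h _ (by omega))
        push_cast; rw [← add_assoc]; linarith
    obtain ⟨k, hk⟩ := exists_nat_gt (u N / c)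
    rw [div_lt_iff₀ hc] at hk
    linarith [hdecr k, hu (N + k)]
  refine eventually_atTop.2 ⟨m, fun n hn => ?_⟩
  induction n, hn using Nat.le_induction with
  | base => linarith
  | succ n hmn ih =>
    obtain ⟨hstep, hdesc⟩ := hN n (hNm.trans hmn)
    by_cases h : θ ≤ u n
    · linarith [hdesc h]
    · linarith

section PerturbedAPS

variable {X : Type*} [NormedAddCommGroup X] {An Bn : ℕ → Set X} {a₀ y : X} {a b : ℕ → X}

theorem IsPerturbedAPS.eventually_mem_left (hab : IsPerturbedAPS An Bn a₀ a b) :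
    ∀ᶠ n in atTop, a n ∈ An n :=
  eventually_atTop.2 ⟨1, fun n hn => by
    obtain ⟨k, rfl⟩ := Nat.exists_eq_add_of_le' hn
    exact (hab.2 k).2.1⟩

variable [InnerProductSpace ℝ X] {f : X →L[ℝ] ℝ}

theorem IsPerturbedAPS.eventually_sq_norm_sub_add_le (hab : IsPerturbedAPS An Bn a₀ a b)
    (hAv : ∀ n, Convex ℝ (An n)) (hBv : ∀ n, Convex ℝ (Bn n))
    (hyAn : ∀ ε > 0, ∀ᶠ n in atTop, ∃ q ∈ An n, ‖q - y‖ < ε)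
    (hyBn : ∀ ε > 0, ∀ᶠ n in atTop, ∃ q ∈ Bn n, ‖q - y‖ < ε) {e : ℝ} (he : 0 < e) :
    ∀ᶠ n in atTop, ‖a (n + 1) - y‖ ^ 2 + ‖a n - b (n + 1)‖ ^ 2 / 2 ≤ ‖a n - y‖ ^ 2 + e := by
  set ε := min 1 (e / 4)
  have hε : 0 < ε := by positivity
  have hεe : ε ^ 2 ≤ e / 4 := by
    nlinarith [min_le_left 1 (e / 4), min_le_right 1 (e / 4)]
  filter_upwards [(tendsto_add_atTop_nat 1).eventually (hyBn ε hε),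
    (tendsto_add_atTop_nat 1).eventually (hyAn ε hε)] with n ⟨z, hz, hzy⟩ ⟨w, hw, hwy⟩
  have hb := (hab.2 n).1.sq_norm_sub_add_le (hBv _) hz y
  have ha := (hab.2 n).2.sq_norm_sub_add_le (hAv _) hw y
  have hz2 : ‖z - y‖ ^ 2 ≤ ε ^ 2 := pow_le_pow_left₀ (norm_nonneg _) hzy.le 2
  have hw2 : ‖w - y‖ ^ 2 ≤ ε ^ 2 := pow_le_pow_left₀ (norm_nonneg _) hwy.le 2
  nlinarith [sq_nonneg ‖b (n + 1) - a (n + 1)‖]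

theorem IsPerturbedAPS.exists_eventually_le_norm_sub (hab : IsPerturbedAPS An Bn a₀ a b)
    (hBv : ∀ n, Convex ℝ (Bn n)) (hf : ‖f‖ ≤ 1)
    (hyBn : ∀ ε > 0, ∀ᶠ n in atTop, ∃ q ∈ Bn n, ‖q - y‖ < ε) {η : ℝ} (hη : 0 < η)
    (hconeA : ∃ κ > 0, ∀ᶠ n in atTop, ∀ p ∈ An n, η ≤ ‖p - y‖ → f p ≤ f y - κ * ‖p - y‖)
    (hconeB : ∀ ε > 0, ∀ᶠ n in atTop, ∀ p ∈ Bn n, f y - ε * (1 + ‖p - y‖) ≤ f p) :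
    ∃ κ > 0, ∀ᶠ n in atTop, η ≤ ‖a n - y‖ → κ ≤ ‖a n - b (n + 1)‖ := by
  obtain ⟨κ, hκ, hA⟩ := hconeA
  set ε := min (κ / 2) (κ * η / 12)
  have hε : 0 < ε := by positivity
  have hεκ : ε ≤ κ / 2 := min_le_left _ _
  have hεη : ε ≤ κ * η / 12 := min_le_right _ _
  refine ⟨κ * η / 4, by positivity, ?_⟩
  filter_upwards [hA, (tendsto_add_atTop_nat 1).eventually (hconeB ε hε),
    (tendsto_add_atTop_nat 1).eventually (hyBn 1 one_pos), hab.eventually_mem_left]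
    with n hAn hBn ⟨z, hz, hzy⟩ han hηa
  have hproj := (hab.2 n).1
  have hby : ‖b (n + 1) - y‖ ≤ ‖a n - y‖ + 2 := by
    linarith [hproj.norm_sub_le_add (hBv _) hz y]
  have h1 : ε * (1 + ‖b (n + 1) - y‖) ≤ ε * (3 + ‖a n - y‖) :=
    mul_le_mul_of_nonneg_left (by linarith) hε.le
  have h2 : ε * ‖a n - y‖ ≤ κ / 2 * ‖a n - y‖ := by gcongr
  have h3 : κ * η ≤ κ * ‖a n - y‖ := by gcongr
  linarith [hAn (a n) han hηa, hBn (b (n + 1)) hproj.1, f.apply_sub_apply_le hf (b (n + 1)) (a n),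
    norm_sub_rev (b (n + 1)) (a n)]

theorem IsPerturbedAPS.tendsto_left (hab : IsPerturbedAPS An Bn a₀ a b)
    (hAv : ∀ n, Convex ℝ (An n)) (hBv : ∀ n, Convex ℝ (Bn n)) (hf : ‖f‖ ≤ 1)
    (hyAn : ∀ ε > 0, ∀ᶠ n in atTop, ∃ q ∈ An n, ‖q - y‖ < ε)
    (hyBn : ∀ ε > 0, ∀ᶠ n in atTop, ∃ q ∈ Bn n, ‖q - y‖ < ε)
    (hconeA : ∀ η > 0, ∃ κ > 0, ∀ᶠ n in atTop, ∀ p ∈ An n, η ≤ ‖p - y‖ →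
      f p ≤ f y - κ * ‖p - y‖)
    (hconeB : ∀ ε > 0, ∀ᶠ n in atTop, ∀ p ∈ Bn n, f y - ε * (1 + ‖p - y‖) ≤ f p) :
    Tendsto a atTop (𝓝 y) := by
  refine Metric.tendsto_nhds.2 fun ε hε => ?_
  have hη : 0 < ε / 2 := by positivity
  obtain ⟨κ, hκ, hsep⟩ :=
    hab.exists_eventually_le_norm_sub hBv hf hyBn hη (hconeA _ hη) hconeB
  have henergy := hab.eventually_sq_norm_sub_add_le hAv hBv hyAn hyBn
    (e := min ((ε / 2) ^ 2) (κ ^ 2 / 4)) (by positivity)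
  have hsmall := eventually_le_add_of_descent (u := fun n => ‖a n - y‖ ^ 2) (fun _ => by positivity)
    (sq_nonneg (ε / 2)) (by positivity : 0 < κ ^ 2 / 4)
    (henergy.mono fun n h => by
      linarith [min_le_left ((ε / 2) ^ 2) (κ ^ 2 / 4), sq_nonneg ‖a n - b (n + 1)‖])
    ((henergy.and hsep).mono fun n ⟨h, hs⟩ hθ => by
      have hκa := hs ((pow_le_pow_iff_left₀ hη.le (norm_nonneg _) two_ne_zero).1 hθ)
      nlinarith [min_le_right ((ε / 2) ^ 2) (κ ^ 2 / 4)])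
  filter_upwards [hsmall] with n hn
  rw [dist_eq_norm, ← pow_lt_pow_iff_left₀ (norm_nonneg _) hε.le two_ne_zero]
  linarith [pow_pos hε 2]

theorem IsPerturbedAPS.tendsto_right (hab : IsPerturbedAPS An Bn a₀ a b)
    (hBv : ∀ n, Convex ℝ (Bn n))
    (hyBn : ∀ ε > 0, ∀ᶠ n in atTop, ∃ q ∈ Bn n, ‖q - y‖ < ε) (ha : Tendsto a atTop (𝓝 y)) :
    Tendsto b atTop (𝓝 y) := by
  refine (tendsto_add_atTop_iff_nat 1).1 (Metric.tendsto_nhds.2 fun ε hε => ?_)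
  filter_upwards [Metric.tendsto_nhds.1 ha (ε / 3) (by positivity),
    (tendsto_add_atTop_nat 1).eventually (hyBn (ε / 3) (by positivity))] with n han ⟨z, hz, hzy⟩
  rw [dist_eq_norm] at han ⊢
  linarith [(hab.2 n).1.norm_sub_le_add (hBv _) hz y]

end PerturbedAPS

theorem stmt0_general {X : Type*} [NormedAddCommGroup X] [InnerProductSpace ℝ X]
    (A B : Set X)
    (An Bn : ℕ → Set X)
    (hAn : ∀ n, (An n).Nonempty ∧ IsClosed (An n) ∧ Convex ℝ (An n))
    (hBn : ∀ n, (Bn n).Nonempty ∧ IsClosed (Bn n) ∧ Convex ℝ (Bn n))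
    (hAW : AWTendsto An A) (hBW : AWTendsto Bn B)
    (y : X) (hy : y ∈ A ∩ B) (f : X →L[ℝ] ℝ) (hf : ‖f‖ = 1)
    (hinf : ∀ x ∈ B, f y ≤ f x)
    (hexp : StronglyExposes f A y)
    (a₀ : X) (a b : ℕ → X) (hab : IsPerturbedAPS An Bn a₀ a b) :
    Tendsto a atTop (nhds y) ∧ Tendsto b atTop (nhds y) := by
  have hAv n := (hAn n).2.2
  have hBv n := (hBn n).2.2
  have hyAn : ∀ ε > 0, ∀ᶠ n in atTop, ∃ q ∈ An n, ‖q - y‖ < ε := fun _ hε =>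
    hAW.eventually_exists_norm_sub_lt (fun n => (hAn n).1) hy.1 hε
  have hyBn : ∀ ε > 0, ∀ᶠ n in atTop, ∃ q ∈ Bn n, ‖q - y‖ < ε := fun _ hε =>
    hBW.eventually_exists_norm_sub_lt (fun n => (hBn n).1) hy.2 hε
  have ha := hab.tendsto_left hAv hBv hf.le hyAn hyBn
    (fun _ hη => hAW.exists_eventually_apply_le_sub_mul hAv hyAn hexp hf.le hη)
    (fun _ hε => hBW.eventually_sub_mul_le_apply hBv hyBn hy.2 hinf hf.le hε)
  exact ⟨ha, hab.tendsto_right hBv hyBn ha⟩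

theorem stmt0 {X : Type*} [NormedAddCommGroup X] [InnerProductSpace ℝ X] [CompleteSpace X]
    (A B : Set X) (hAne : A.Nonempty) (hAc : IsClosed A) (hAv : Convex ℝ A)
    (hBne : B.Nonempty) (hBc : IsClosed B) (hBv : Convex ℝ B)
    (An Bn : ℕ → Set X)
    (hAn : ∀ n, (An n).Nonempty ∧ IsClosed (An n) ∧ Convex ℝ (An n))
    (hBn : ∀ n, (Bn n).Nonempty ∧ IsClosed (Bn n) ∧ Convex ℝ (Bn n))
    (hAW : AWTendsto An A) (hBW : AWTendsto Bn B)
    (y : X) (hy : y ∈ A ∩ B) (f : X →L[ℝ] ℝ) (hf : ‖f‖ = 1)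
    (hinf : ∀ x ∈ B, f y ≤ f x) (hsup : ∀ x ∈ A, f x ≤ f y)
    (hexp : StronglyExposes f A y)
    (a₀ : X) (a b : ℕ → X) (hab : IsPerturbedAPS An Bn a₀ a b) :
    Tendsto a atTop (nhds y) ∧ Tendsto b atTop (nhds y) :=
  stmt0_general A B An Bn hAn hBn hAW hBW y hy f hf hinf hexp a₀ a b hab
end

section
/- Let X be a real Hilbert space, A a closed convex subset of X with nonempty interior containing the origin on its boundary, and f ∈ X* \ {0} a functional that strongly exposes A at the origin. Let α ≤ 0 and B = {x ∈ X : f(x) ≥ α}. Then the couple (A, B) is stable. -/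
open Filter Metric Topology

/-- The couple `(A, B)` is stable: for every sequences of nonempty closed convex sets
Attouch–Wets converging to `A` and `B` respectively, and every starting point, the
corresponding perturbed alternating projections sequences converge in norm. -/
def StablePair {X : Type*} [NormedAddCommGroup X] [NormedSpace ℝ X] (A B : Set X) : Prop :=
  ∀ An Bn : ℕ → Set X,
    (∀ n, (An n).Nonempty ∧ IsClosed (An n) ∧ Convex ℝ (An n)) →
    (∀ n, (Bn n).Nonempty ∧ IsClosed (Bn n) ∧ Convex ℝ (Bn n)) →
    AWTendsto An A → AWTendsto Bn B →
    ∀ a₀ : X, ∀ a b : ℕ → X, IsPerturbedAPS An Bn a₀ a b →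
      (∃ la : X, Filter.Tendsto a Filter.atTop (nhds la)) ∧
      (∃ lb : X, Filter.Tendsto b Filter.atTop (nhds lb))

open RealInnerProductSpace

/-!
If `α < 0`, some interior point `e` of `A` has `f e > α`, so `A ∩ B` contains a ball around
`e`; by Hahn–Banach, for large `n` the perturbed sets contain a slightly smaller ball around
`e`, and a projection onto a set containing `B(e, ρ)` decreases `‖· - e‖²` by at least `2ρ`
times the length of the step. Hence the iterates have finite length and converge.

If `α = 0`, then `A ∩ B = {0}`. Strong exposure gives `f ≤ -m` on `A` away from `0`, and
scaling towards points of `Aₙ` near `0` turns this into `f x ≤ -c ‖x‖` on all of `Aₙ` outside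
any ball, uniformly for large `n`, while `f y ≥ -θ (1 + ‖y‖)` on `Bₙ`. So from a point of norm
at least `ρ` one round of projections moves a fixed fraction of its norm, and by firm
nonexpansiveness it shrinks the norm by a fixed factor: both sequences tend to `0`.
-/

theorem cauchySeq_of_mul_dist_le_sub {α : Type*} [PseudoMetricSpace α] {x : ℕ → α}
    {V : ℕ → ℝ} {c : ℝ} (hc : 0 < c) (hV : ∀ n, 0 ≤ V n)
    (h : ∀ n, c * dist (x n) (x (n + 1)) ≤ V n - V (n + 1)) : CauchySeq x := by
  refine cauchySeq_of_summable_dist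
    (summable_of_sum_range_le (c := V 0 / c) (fun _ => dist_nonneg) fun n => ?_)
  rw [le_div_iff₀ hc, Finset.sum_mul]
  calc ∑ i ∈ Finset.range n, dist (x i) (x (i + 1)) * c
      ≤ ∑ i ∈ Finset.range n, (V i - V (i + 1)) :=
        Finset.sum_le_sum fun i _ => by linarith [h i]
    _ = V 0 - V n := Finset.sum_range_sub' V n
    _ ≤ V 0 := by linarith [hV n]

theorem tendsto_zero_of_forall_eventually_le_max {u : ℕ → ℝ} (hu : ∀ n, 0 ≤ u n)
    (h : ∀ ρ > 0, ∃ η ∈ Set.Ico (0 : ℝ) 1, ∀ᶠ n in atTop, u (n + 1) ≤ max (η * u n) ρ) :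
    Tendsto u atTop (𝓝 0) := by
  refine tendsto_order.2 ⟨fun ε hε => Eventually.of_forall fun n => hε.trans_le (hu n),
    fun ε hε => ?_⟩
  obtain ⟨η, ⟨hη0, hη1⟩, hstep⟩ := h (ε / 2) (half_pos hε)
  obtain ⟨N, hN⟩ := eventually_atTop.1 hstep
  have hiter : ∀ k, u (k + N) ≤ max (η ^ k * u N) (ε / 2) := by
    intro k
    induction k with
    | zero => simp
    | succ k ih =>
      calc u (k + 1 + N) = u (k + N + 1) := by rw [add_right_comm]
        _ ≤ max (η * u (k + N)) (ε / 2) := hN _ (Nat.le_add_left N k)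
        _ ≤ max (η ^ (k + 1) * u N) (ε / 2) := by
          refine max_le ((mul_le_mul_of_nonneg_left ih hη0).trans ?_) (le_max_right _ _)
          rw [mul_max_of_nonneg _ _ hη0, pow_succ', mul_assoc]
          exact max_le_max le_rfl (by nlinarith)
  have hsmall : ∀ᶠ k in atTop, η ^ k * u N < ε :=
    ((tendsto_pow_atTop_nhds_zero_of_lt_one hη0 hη1).mul_const (u N)).eventually
      (gt_mem_nhds (by simpa using hε))
  obtain ⟨K, hK⟩ := eventually_atTop.1 hsmall
  refine eventually_atTop.2 ⟨K + N, fun n hn => ?_⟩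
  obtain ⟨k, rfl⟩ : ∃ k, n = k + N := ⟨n - N, by omega⟩
  exact (hiter k).trans_lt (max_lt (hK k (by omega)) (half_lt_self hε))

section Normed

variable {X : Type*} [NormedAddCommGroup X]

namespace AWTendsto

variable {Cn : ℕ → Set X} {C : Set X}

theorem eventually_abs_infDist_sub_lt_s3 (hC : AWTendsto Cn C) (R : ℝ) {ε : ℝ} (hε : 0 < ε) :
    ∀ᶠ n in atTop, ∀ x : X, ‖x‖ ≤ R → |infDist x (Cn n) - infDist x C| < ε := by
  obtain ⟨n₀, hn₀⟩ := hC ⌈R⌉₊ ε hε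
  exact eventually_atTop.2 ⟨n₀, fun n hn x hx => hn₀ n hn x (hx.trans (Nat.le_ceil R))⟩

theorem eventually_exists_dist_lt (hC : AWTendsto Cn C) (hne : ∀ n, (Cn n).Nonempty) {y : X}
    (hy : y ∈ C) {ε : ℝ} (hε : 0 < ε) : ∀ᶠ n in atTop, ∃ x ∈ Cn n, dist y x < ε := by
  filter_upwards [hC.eventually_abs_infDist_sub_lt_s3 ‖y‖ hε] with n hn
  have := hn y le_rfl
  rw [infDist_zero_of_mem hy, sub_zero, abs_of_nonneg infDist_nonneg] at this
  exact (infDist_lt_iff (hne n)).1 this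

theorem eventually_forall_exists_dist_lt (hC : AWTendsto Cn C) (hne : C.Nonempty) (R : ℝ)
    {ε : ℝ} (hε : 0 < ε) :
    ∀ᶠ n in atTop, ∀ x ∈ Cn n, ‖x‖ ≤ R → ∃ y ∈ C, dist x y < ε := by
  filter_upwards [hC.eventually_abs_infDist_sub_lt_s3 R hε] with n hn x hx hxR
  have := hn x hxR
  rw [infDist_zero_of_mem hx, zero_sub, abs_neg, abs_of_nonneg infDist_nonneg] at this
  exact (infDist_lt_iff hne).1 this

end AWTendsto

variable [NormedSpace ℝ X]

theorem ContinuousLinearMap.sub_le_norm_mul_dist (g : X →L[ℝ] ℝ) (u v : X) :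
    g u - g v ≤ ‖g‖ * dist u v := by
  rw [dist_eq_norm, ← map_sub]
  exact (le_abs_self _).trans (g.le_opNorm _)

theorem ContinuousLinearMap.mul_norm_le_norm_sub (g : X →L[ℝ] ℝ) {x y : X} {c μ : ℝ}
    (hμ : μ * (‖g‖ + 1) ≤ c) (hxy : c * ‖x‖ ≤ g y - g x) : μ * ‖x‖ ≤ ‖x - y‖ := by
  have hg := g.sub_le_norm_mul_dist y x
  rw [dist_comm, dist_eq_norm] at hg
  refine le_of_mul_le_mul_left ?_ (by positivity : (0 : ℝ) < ‖g‖ + 1)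
  nlinarith [norm_nonneg x, norm_nonneg (x - y)]

theorem Convex.apply_sub_le_of_forall_norm_sub_eq {C : Set X} (hC : Convex ℝ C) {d x : X}
    (hd : d ∈ C) (hx : x ∈ C) (g : X →L[ℝ] ℝ) {r k : ℝ} (hr : 0 < r) (hrx : r ≤ ‖x - d‖)
    (hk : ∀ z ∈ C, ‖z - d‖ = r → g z - g d ≤ k) : g x - g d ≤ k * ‖x - d‖ / r := by
  have hxd : 0 < ‖x - d‖ := hr.trans_le hrx
  set t := r / ‖x - d‖
  have ht : t ∈ Set.Icc (0 : ℝ) 1 := ⟨by positivity, div_le_one_of_le₀ hrx hxd.le⟩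
  have hz := hk _ (hC.add_smul_sub_mem hd hx ht) (by
    rw [add_sub_cancel_left, norm_smul, Real.norm_of_nonneg ht.1, div_mul_cancel₀ _ hxd.ne'])
  rw [map_add, map_smul, smul_eq_mul, map_sub, add_sub_cancel_left] at hz
  rw [le_div_iff₀ hr]
  calc (g x - g d) * r = t * (g x - g d) * ‖x - d‖ := by simp only [t]; field_simp
    _ ≤ k * ‖x - d‖ := mul_le_mul_of_nonneg_right hz hxd.le

theorem StronglyExposes.exists_forall_le_sub {f : X →L[ℝ] ℝ} {A : Set X} {a : X}
    (h : StronglyExposes f A a) {ρ : ℝ} (hρ : 0 < ρ) :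
    ∃ m > 0, ∀ x ∈ A, ρ ≤ ‖x - a‖ → f x ≤ f a - m := by
  by_contra! hcon
  choose x hxA hxρ hxf using fun n : ℕ => hcon (1 / (n + 1)) Nat.one_div_pos_of_nat
  have hfx : Tendsto (fun n => f (x n)) atTop (𝓝 (f a)) := by
    refine tendsto_of_tendsto_of_tendsto_of_le_of_le ?_ tendsto_const_nhds
      (fun n => (hxf n).le) fun n => h.2.1 _ (hxA n)
    simpa using tendsto_one_div_add_atTop_nhds_zero_nat.const_sub (f a)
  obtain ⟨n, hn⟩ := ((h.2.2 x hxA hfx).eventually (ball_mem_nhds a hρ)).exists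
  exact (hxρ n).not_gt (by rwa [dist_eq_norm] at hn)

namespace AWTendsto

variable {Cn : ℕ → Set X} {C : Set X}

theorem eventually_exists_forall_norm_sub_eq (hC : AWTendsto Cn C) (hne : ∀ n, (Cn n).Nonempty)
    (h0 : (0 : X) ∈ C) (g : X →L[ℝ] ℝ) {r k ε : ℝ} (hε : 0 < ε) (hεr : ε ≤ r / 4)
    (hk : ∀ z ∈ C, r / 2 ≤ ‖z‖ → ‖z‖ ≤ 2 * r → g z ≤ k) :
    ∀ᶠ n in atTop, ∃ d ∈ Cn n, ‖d‖ < ε ∧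
      ∀ z ∈ Cn n, ‖z - d‖ = r → g z - g d ≤ k + 2 * ‖g‖ * ε := by
  filter_upwards [hC.eventually_exists_dist_lt hne h0 hε,
    hC.eventually_forall_exists_dist_lt ⟨0, h0⟩ (2 * r) hε] with n ⟨d, hd, hdε⟩ hnear
  rw [dist_zero_left] at hdε
  refine ⟨d, hd, hdε, fun z hz hzr => ?_⟩
  have hz_le : ‖z‖ ≤ ‖z - d‖ + ‖d‖ := norm_le_norm_sub_add z d
  have hz_ge : ‖z - d‖ ≤ ‖z‖ + ‖d‖ := norm_sub_le z d
  obtain ⟨z', hz', hzz'⟩ := hnear z hz (by linarith)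
  have hz'_le : ‖z'‖ ≤ ‖z‖ + dist z z' := by
    rw [dist_comm, dist_eq_norm]; exact norm_le_norm_add_norm_sub' z' z
  have hz'_ge : ‖z‖ ≤ ‖z'‖ + dist z z' := by
    rw [dist_eq_norm]; exact norm_le_norm_add_norm_sub' z z'
  have hgz' := hk z' hz' (by linarith) (by linarith)
  have hgz := g.sub_le_norm_mul_dist z z'
  have hgd := g.sub_le_norm_mul_dist 0 d
  rw [map_zero, dist_zero_left] at hgd
  nlinarith [norm_nonneg g]

theorem eventually_le_mul_norm_add (hC : AWTendsto Cn C) (hne : ∀ n, (Cn n).Nonempty)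
    (hcv : ∀ n, Convex ℝ (Cn n)) (h0 : (0 : X) ∈ C) (g : X →L[ℝ] ℝ) {r k δ : ℝ}
    (hr : 0 < r) (hδ : 0 < δ) (hk : ∀ z ∈ C, r / 2 ≤ ‖z‖ → ‖z‖ ≤ 2 * r → g z ≤ k) :
    ∀ᶠ n in atTop, ∀ x ∈ Cn n, 2 * r ≤ ‖x‖ → g x ≤ (k + δ) * ‖x‖ / r + δ := by
  set D := 2 * ‖g‖ + |k + δ| / r + 1
  have hD : 0 < D := by positivity
  set ε := min (r / 4) (δ / D)
  have hε : 0 < ε := lt_min (by positivity) (by positivity)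
  have hεr : ε ≤ r / 4 := min_le_left _ _
  have hεD : ε * D ≤ δ := (le_div_iff₀ hD).1 (min_le_right _ _)
  have hεD' : ε * D = 2 * ‖g‖ * ε + |k + δ| * ε / r + ε := by ring
  have hgε : 0 ≤ ‖g‖ * ε := by positivity
  have hkε : 0 ≤ |k + δ| * ε / r := by positivity
  filter_upwards [hC.eventually_exists_forall_norm_sub_eq hne h0 g hε hεr hk]
    with n ⟨d, hd, hdε, hsphere⟩ x hx hxr
  have hxd := (hcv n).apply_sub_le_of_forall_norm_sub_eq hd hx g hr
    (by linarith [norm_sub_norm_le x d]) fun z hz hzr => (hsphere z hz hzr).trans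
      (show k + 2 * ‖g‖ * ε ≤ k + δ by linarith)
  have hgd := g.sub_le_norm_mul_dist d 0
  rw [map_zero, dist_zero_right] at hgd
  have hshift : (k + δ) * (‖x - d‖ - ‖x‖) ≤ |k + δ| * ε := by
    refine (le_abs_self _).trans ?_
    rw [abs_mul]
    refine mul_le_mul_of_nonneg_left ?_ (abs_nonneg _)
    exact abs_sub_le_iff.2 ⟨by linarith [norm_sub_le x d], by linarith [norm_sub_norm_le x d]⟩
  have hdiv : (k + δ) * ‖x - d‖ / r ≤ (k + δ) * ‖x‖ / r + |k + δ| * ε / r := by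
    rw [← add_div]; exact div_le_div_of_nonneg_right (by linarith) hr.le
  linarith [mul_le_mul_of_nonneg_left hdε.le (norm_nonneg g)]

end AWTendsto

theorem StronglyExposes.eventually_le_neg_mul_norm {f : X →L[ℝ] ℝ} {A : Set X}
    (hexp : StronglyExposes f A 0) {An : ℕ → Set X} (hA : AWTendsto An A)
    (hne : ∀ n, (An n).Nonempty) (hcv : ∀ n, Convex ℝ (An n)) {ρ : ℝ} (hρ : 0 < ρ) :
    ∃ c > 0, ∀ᶠ n in atTop, ∀ x ∈ An n, ρ ≤ ‖x‖ → f x ≤ -(c * ‖x‖) := by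
  obtain ⟨m, hm, hslice⟩ := hexp.exists_forall_le_sub (half_pos (half_pos hρ))
  refine ⟨m / (2 * ρ), by positivity, ?_⟩
  filter_upwards [hA.eventually_le_mul_norm_add hne hcv hexp.1 f (half_pos hρ) (half_pos hm)
    (k := -m) fun z hz hz1 _ => by simpa using hslice z hz (by simpa using hz1)]
    with n hn x hx hxρ
  have hfx := hn x hx (by linarith)
  have e1 : (-m + m / 2) * ‖x‖ / (ρ / 2) = -(m / (2 * ρ) * ‖x‖) - m / (2 * ρ) * ‖x‖ := by
    field_simp; ring
  have e2 : m / (2 * ρ) * ρ ≤ m / (2 * ρ) * ‖x‖ := by gcongr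
  have e3 : m / (2 * ρ) * ρ = m / 2 := by field_simp
  linarith

theorem AWTendsto.eventually_neg_mul_one_add_norm_le {f : X →L[ℝ] ℝ} {Cn : ℕ → Set X}
    {C : Set X} (hC : AWTendsto Cn C) (hne : ∀ n, (Cn n).Nonempty) (hcv : ∀ n, Convex ℝ (Cn n))
    (h0 : (0 : X) ∈ C) (hf : ∀ z ∈ C, 0 ≤ f z) {θ : ℝ} (hθ : 0 < θ) :
    ∀ᶠ n in atTop, ∀ y ∈ Cn n, -(θ * (1 + ‖y‖)) ≤ f y := by
  filter_upwards [hC.eventually_le_mul_norm_add hne hcv h0 (-f) one_pos hθ (k := 0)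
      fun z hz _ _ => by simpa using hf z hz,
    hC.eventually_forall_exists_dist_lt ⟨0, h0⟩ 2 (ε := θ / (‖f‖ + 1)) (by positivity)]
    with n hfar hnear y hy
  rcases le_total 2 ‖y‖ with hy2 | hy2
  · have := hfar y hy (by linarith)
    simp only [neg_apply, zero_add, div_one] at this
    linarith
  · obtain ⟨y', hy', hyy'⟩ := hnear y hy hy2
    have h1 := f.sub_le_norm_mul_dist y' y
    have h2 : ‖f‖ * dist y' y ≤ θ := by
      rw [dist_comm]
      calc ‖f‖ * dist y y' ≤ (‖f‖ + 1) * (θ / (‖f‖ + 1)) := by gcongr; linarith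
        _ = θ := by field_simp
    nlinarith [hf y' hy', norm_nonneg y]

end Normed

section Hilbert

variable {X : Type*} [NormedAddCommGroup X] [InnerProductSpace ℝ X]

namespace IsProjOn

variable {K : Set X} {x p z : X}

theorem inner_sub_le_zero (hK : Convex ℝ K) (hp : IsProjOn K x p) (hz : z ∈ K) :
    ⟪x - p, z - p⟫ ≤ 0 := by
  have : Nonempty K := ⟨⟨p, hp.1⟩⟩
  refine (norm_eq_iInf_iff_real_inner_le_zero hK hp.1).1 (le_antisymm (le_ciInf fun w => ?_)
    (ciInf_le ⟨0, fun _ ⟨_, hw⟩ => hw ▸ norm_nonneg _⟩ (⟨p, hp.1⟩ : K))) z hz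
  simpa [dist_eq_norm] using hp.2 w w.2

theorem norm_sub_sq_add_norm_sub_sq_le (hK : Convex ℝ K) (hp : IsProjOn K x p) (hz : z ∈ K) :
    ‖p - z‖ ^ 2 + ‖x - p‖ ^ 2 ≤ ‖x - z‖ ^ 2 := by
  have h := hp.inner_sub_le_zero hK hz
  rw [show x - z = (x - p) + (p - z) by abel, norm_add_sq_real,
    show p - z = -(z - p) by abel, inner_neg_right, norm_neg]
  linarith

theorem norm_sub_le (hK : Convex ℝ K) (hp : IsProjOn K x p) (hz : z ∈ K) :
    ‖p - z‖ ≤ ‖x - z‖ :=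
  pow_le_pow_iff_left₀ (norm_nonneg _) (norm_nonneg _) two_ne_zero |>.1 <| by
    linarith [hp.norm_sub_sq_add_norm_sub_sq_le hK hz, sq_nonneg ‖x - p‖]

theorem norm_le_add (hK : Convex ℝ K) (hp : IsProjOn K x p) (hz : z ∈ K) :
    ‖p‖ ≤ ‖x‖ + 2 * ‖z‖ := by
  linarith [norm_le_norm_sub_add p z, hp.norm_sub_le hK hz, _root_.norm_sub_le x z]

theorem norm_le_of_mul_norm_le {μ κ : ℝ} (hK : Convex ℝ K) (hp : IsProjOn K x p) (hz : z ∈ K)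
    (hzκ : ‖z‖ ≤ κ) (hμ0 : 0 ≤ μ) (hμ1 : μ ≤ 1) (hκ : 12 * κ ≤ μ ^ 4 * ‖x‖)
    (hstep : μ * ‖x‖ ≤ ‖x - p‖) : ‖p‖ ≤ (1 - μ ^ 2 / 2) * ‖x‖ + κ := by
  have hfirm := hp.norm_sub_sq_add_norm_sub_sq_le hK hz
  have hxz : ‖x - z‖ ≤ ‖x‖ + κ := by linarith [_root_.norm_sub_le x z]
  have hμ2 : μ ^ 2 ≤ 1 := pow_le_one₀ hμ0 hμ1
  have hμ4 : μ ^ 4 ≤ 1 := pow_le_one₀ hμ0 hμ1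
  have hκ0 : 0 ≤ κ := (norm_nonneg z).trans hzκ
  have hsq : ‖p - z‖ ^ 2 ≤ ((1 - μ ^ 2 / 2) * ‖x‖) ^ 2 := by
    have h1 : (μ * ‖x‖) ^ 2 ≤ ‖x - p‖ ^ 2 := pow_le_pow_left₀ (by positivity) hstep 2
    have h2 : ‖x - z‖ ^ 2 ≤ (‖x‖ + κ) ^ 2 := pow_le_pow_left₀ (norm_nonneg _) hxz 2
    have h3 : κ ≤ ‖x‖ := by nlinarith [norm_nonneg x]
    nlinarith [mul_le_mul_of_nonneg_left h3 hκ0, mul_le_mul_of_nonneg_right hκ (norm_nonneg x)]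
  have hpz : ‖p - z‖ ≤ (1 - μ ^ 2 / 2) * ‖x‖ :=
    (pow_le_pow_iff_left₀ (norm_nonneg _) (by nlinarith [norm_nonneg x]) two_ne_zero).1 hsq
  linarith [norm_le_norm_sub_add p z]

theorem two_mul_norm_sub_le_of_closedBall_subset {e : X} {ρ : ℝ} (hK : Convex ℝ K)
    (hp : IsProjOn K x p) (hρ : 0 < ρ) (hball : closedBall e ρ ⊆ K) :
    2 * ρ * ‖x - p‖ ≤ ‖x - e‖ ^ 2 - ‖p - e‖ ^ 2 := by
  rcases eq_or_ne x p with rfl | hxp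
  · simp
  have hxp' : 0 < ‖x - p‖ := norm_pos_iff.2 (sub_ne_zero.2 hxp)
  set w := (ρ / ‖x - p‖) • (x - p)
  have hw : ⟪x - p, w⟫ = ρ * ‖x - p‖ := by
    rw [real_inner_smul_right, real_inner_self_eq_norm_sq]; field_simp
  have hz := hp.inner_sub_le_zero hK (z := e + w) (hball (by
    rw [mem_closedBall, dist_eq_norm, add_sub_cancel_left, norm_smul,
      Real.norm_of_nonneg (by positivity), div_mul_cancel₀ _ hxp'.ne']))
  have hsq : ‖x - e‖ ^ 2 - ‖p - e‖ ^ 2 = ‖x - p‖ ^ 2 + 2 * ⟪x - p, p - e⟫ := by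
    rw [show x - e = (x - p) + (p - e) by abel, norm_add_sq_real]; ring
  rw [hsq, show p - e = w - (e + w - p) by abel, inner_sub_right, hw]
  nlinarith [sq_nonneg ‖x - p‖]

end IsProjOn

variable [CompleteSpace X]

theorem closedBall_subset_of_forall_infDist_lt {C : Set X} (hne : C.Nonempty) (hcl : IsClosed C)
    (hcv : Convex ℝ C) {e : X} {R ε : ℝ} (hε : 0 < ε) (h : ∀ z ∈ closedBall e R, infDist z C < ε) :
    closedBall e (R - ε) ⊆ C := by
  intro x hx
  by_contra hxC
  obtain ⟨g, u, hgC, hgx⟩ := geometric_hahn_banach_closed_point hcv hcl hxC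
  set v := (InnerProductSpace.toDual ℝ X).symm g
  have hv : ∀ y, g y = ⟪v, y⟫ := fun y => InnerProductSpace.toDual_symm_apply.symm
  simp only [hv] at hgC hgx
  have hv0 : 0 < ‖v‖ := by
    obtain ⟨c, hc⟩ := hne
    refine norm_pos_iff.2 fun hv0 => ?_
    have := hgC c hc
    rw [hv0, inner_zero_left] at this hgx
    linarith
  have hxR : ‖x - e‖ ≤ R - ε := by rwa [mem_closedBall, dist_eq_norm] at hx
  set z₀ := e + (R / ‖v‖) • v
  obtain ⟨c, hc, hcz⟩ := (infDist_lt_iff hne).1 (h z₀ (by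
    rw [mem_closedBall, dist_eq_norm, add_sub_cancel_left, norm_smul,
      Real.norm_of_nonneg (div_nonneg (by linarith [norm_nonneg (x - e)]) hv0.le),
      div_mul_cancel₀ _ hv0.ne']))
  have hz₀ : ⟪v, z₀⟫ = ⟪v, e⟫ + R * ‖v‖ := by
    rw [inner_add_right, real_inner_smul_right, real_inner_self_eq_norm_sq]; field_simp
  have hcz' : ⟪v, z₀ - c⟫ < ‖v‖ * ε := by
    rw [dist_eq_norm] at hcz
    exact (real_inner_le_norm _ _).trans_lt (mul_lt_mul_of_pos_left hcz hv0)
  have hxe : ⟪v, x - e⟫ ≤ ‖v‖ * (R - ε) :=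
    (real_inner_le_norm _ _).trans (mul_le_mul_of_nonneg_left hxR (norm_nonneg v))
  rw [inner_sub_right] at hcz' hxe
  linarith [hgC c hc]

theorem AWTendsto.eventually_closedBall_subset {Cn : ℕ → Set X} {C : Set X}
    (hC : AWTendsto Cn C) (hCn : ∀ n, (Cn n).Nonempty ∧ IsClosed (Cn n) ∧ Convex ℝ (Cn n))
    {e : X} {r s : ℝ} (hball : closedBall e r ⊆ C) (hs : s < r) :
    ∀ᶠ n in atTop, closedBall e s ⊆ Cn n := by
  filter_upwards [hC.eventually_abs_infDist_sub_lt_s3 (‖e‖ + r) (sub_pos.2 hs)] with n hn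
  have := closedBall_subset_of_forall_infDist_lt (hCn n).1 (hCn n).2.1 (hCn n).2.2
    (sub_pos.2 hs) fun z hz => by
      have := hn z (norm_le_of_mem_closedBall hz)
      rwa [infDist_zero_of_mem (hball hz), sub_zero, abs_of_nonneg infDist_nonneg] at this
  rwa [sub_sub_cancel] at this

theorem IsPerturbedAPS.tendsto_of_eventually_closedBall_subset {An Bn : ℕ → Set X} {a₀ : X}
    {a b : ℕ → X} (hab : IsPerturbedAPS An Bn a₀ a b) (hAcv : ∀ n, Convex ℝ (An n))
    (hBcv : ∀ n, Convex ℝ (Bn n)) {e : X} {ρ : ℝ} (hρ : 0 < ρ)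
    (hA : ∀ᶠ n in atTop, closedBall e ρ ⊆ An n) (hB : ∀ᶠ n in atTop, closedBall e ρ ⊆ Bn n) :
    (∃ la, Tendsto a atTop (𝓝 la)) ∧ (∃ lb, Tendsto b atTop (𝓝 lb)) := by
  set V : X → ℝ := fun x => ‖x - e‖ ^ 2
  have hstep : ∀ᶠ n in atTop, 2 * ρ * ‖a n - b (n + 1)‖ ≤ V (a n) - V (b (n + 1)) ∧
      2 * ρ * ‖b (n + 1) - a (n + 1)‖ ≤ V (b (n + 1)) - V (a (n + 1)) := by
    filter_upwards [(tendsto_add_atTop_nat 1).eventually hA,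
      (tendsto_add_atTop_nat 1).eventually hB] with n hAn hBn
    exact ⟨(hab.2 n).1.two_mul_norm_sub_le_of_closedBall_subset (hBcv _) hρ hBn,
      (hab.2 n).2.two_mul_norm_sub_le_of_closedBall_subset (hAcv _) hρ hAn⟩
  have hdecr : ∀ᶠ n in atTop, 2 * ρ * ‖a n - b (n + 1)‖ ≤ V (a n) - V (a (n + 1)) ∧
      2 * ρ * dist (a n) (a (n + 1)) ≤ V (a n) - V (a (n + 1)) := by
    filter_upwards [hstep] with n ⟨h₁, h₂⟩
    have := norm_sub_le_norm_sub_add_norm_sub (a n) (b (n + 1)) (a (n + 1))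
    rw [dist_eq_norm]
    constructor <;> nlinarith [norm_nonneg (b (n + 1) - a (n + 1))]
  obtain ⟨N, hN⟩ := eventually_atTop.1 hdecr
  have hcauchy : CauchySeq a := (cauchySeq_shift N).1 <|
    cauchySeq_of_mul_dist_le_sub (c := 2 * ρ) (by positivity) (V := fun n => V (a (n + N)))
      (fun _ => sq_nonneg _) fun n => by
        simpa only [add_right_comm n 1 N] using (hN (n + N) (Nat.le_add_left N n)).2
  obtain ⟨la, hla⟩ := cauchySeq_tendsto_of_complete hcauchy
  have hV : Tendsto (fun n => (V (a n) - V (a (n + 1))) / (2 * ρ)) atTop (𝓝 0) := by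
    have hVc : Continuous V := by fun_prop
    simpa using (((hVc.tendsto la).comp hla).sub
      ((hVc.tendsto la).comp (hla.comp (tendsto_add_atTop_nat 1)))).div_const (2 * ρ)
  have hba : Tendsto (fun n => b (n + 1) - a n) atTop (𝓝 0) := by
    refine squeeze_zero_norm' ?_ hV
    filter_upwards [hdecr] with n hn
    rw [norm_sub_rev, le_div_iff₀ (by positivity)]
    linarith [hn.1]
  exact ⟨⟨la, hla⟩, la, (tendsto_add_atTop_iff_nat 1).1 (by simpa using hba.add hla)⟩

theorem stablePair_of_nonempty_interior_inter {A B : Set X} (h : (interior (A ∩ B)).Nonempty) :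
    StablePair A B := by
  intro An Bn hAn hBn hA hB a₀ a b hab
  obtain ⟨e, he⟩ := h
  obtain ⟨r, hr, hball⟩ := nhds_basis_closedBall.mem_iff.1 (mem_interior_iff_mem_nhds.1 he)
  exact hab.tendsto_of_eventually_closedBall_subset (fun n => (hAn n).2.2) (fun n => (hBn n).2.2)
    (half_pos hr)
    (hA.eventually_closedBall_subset hAn (hball.trans Set.inter_subset_left) (half_lt_self hr))
    (hB.eventually_closedBall_subset hBn (hball.trans Set.inter_subset_right) (half_lt_self hr))

end Hilbert

namespace IsPerturbedAPS

variable {X : Type*} [NormedAddCommGroup X] [InnerProductSpace ℝ X] {A : Set X}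
  {f : X →L[ℝ] ℝ} {An Bn : ℕ → Set X} {a₀ : X} {a b : ℕ → X}

theorem eventually_mul_norm_le_norm_sub (hab : IsPerturbedAPS An Bn a₀ a b)
    (hexp : StronglyExposes f A 0) (hA : AWTendsto An A) (hB : AWTendsto Bn {x | 0 ≤ f x})
    (hAne : ∀ n, (An n).Nonempty) (hAcv : ∀ n, Convex ℝ (An n))
    (hBne : ∀ n, (Bn n).Nonempty) (hBcv : ∀ n, Convex ℝ (Bn n)) {r : ℝ} (hr : 0 < r) :
    ∃ μ ∈ Set.Ioc (0 : ℝ) 1, ∀ᶠ n in atTop, r ≤ ‖a n‖ → μ * ‖a n‖ ≤ ‖a n - b (n + 1)‖ := by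
  obtain ⟨c, hc, hAfar⟩ := hexp.eventually_le_neg_mul_norm hA hAne hAcv hr
  set θ := c * r / (2 * (r + 2))
  have h0B : (0 : X) ∈ {x | 0 ≤ f x} := by simp
  have hshift := tendsto_add_atTop_nat 1
  refine ⟨min 1 (c / (2 * (‖f‖ + 1))), ⟨lt_min one_pos (by positivity), min_le_left _ _⟩, ?_⟩
  filter_upwards [hAfar,
    hshift.eventually (hB.eventually_neg_mul_one_add_norm_le hBne hBcv h0B (fun _ hz => hz)
      (show 0 < θ by positivity)),
    hshift.eventually (hB.eventually_exists_dist_lt hBne h0B one_half_pos),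
    eventually_ge_atTop 1] with n hAn hBn ⟨y₀, hy₀, hy₀_norm⟩ hn hlarge
  rw [dist_zero_left] at hy₀_norm
  have hmem : a n ∈ An n := by
    obtain ⟨k, rfl⟩ := Nat.exists_eq_add_of_le' hn
    exact (hab.2 k).2.1
  have hb := (hab.2 n).1.norm_le_add (hBcv _) hy₀
  have hθ : θ * (2 + ‖a n‖) ≤ c / 2 * ‖a n‖ := by
    rw [div_mul_eq_mul_div, div_le_iff₀ (by positivity)]
    nlinarith
  have hθb : θ * (1 + ‖b (n + 1)‖) ≤ θ * (2 + ‖a n‖) :=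
    mul_le_mul_of_nonneg_left (by linarith) (by positivity)
  refine f.mul_norm_le_norm_sub (c := c / 2) ?_ ?_
  · have := (le_div_iff₀ (by positivity)).1 (min_le_right 1 (c / (2 * (‖f‖ + 1))))
    linarith
  · linarith [hAn (a n) hmem hlarge, hBn (b (n + 1)) (hab.2 n).1.1]

theorem eventually_norm_succ_le_max (hab : IsPerturbedAPS An Bn a₀ a b)
    (hexp : StronglyExposes f A 0) (hA : AWTendsto An A) (hB : AWTendsto Bn {x | 0 ≤ f x})
    (hAne : ∀ n, (An n).Nonempty) (hAcv : ∀ n, Convex ℝ (An n))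
    (hBne : ∀ n, (Bn n).Nonempty) (hBcv : ∀ n, Convex ℝ (Bn n)) {ρ : ℝ} (hρ : 0 < ρ) :
    ∃ η ∈ Set.Ico (0 : ℝ) 1, ∀ᶠ n in atTop, ‖a (n + 1)‖ ≤ max (η * ‖a n‖) ρ := by
  obtain ⟨μ, ⟨hμ0, hμ1⟩, hmove⟩ :=
    hab.eventually_mul_norm_le_norm_sub hexp hA hB hAne hAcv hBne hBcv (half_pos hρ)
  have hμ2 : μ ^ 2 ≤ 1 := pow_le_one₀ hμ0.le hμ1
  have hμ4 : μ ^ 4 ≤ μ ^ 2 := pow_le_pow_of_le_one hμ0.le hμ1 (by norm_num)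
  set κ := μ ^ 4 * ρ / 24
  have hκ0 : 0 < κ := by positivity
  have hκρ : 24 * κ ≤ ρ := by simp only [κ]; nlinarith
  have hshift := tendsto_add_atTop_nat 1
  refine ⟨1 - μ ^ 2 / 4, ⟨by nlinarith, by nlinarith⟩, ?_⟩
  filter_upwards [hmove, hshift.eventually (hA.eventually_exists_dist_lt hAne hexp.1 hκ0),
    hshift.eventually (hB.eventually_exists_dist_lt hBne (show (0 : X) ∈ {x | 0 ≤ f x} by simp)
      hκ0)] with n hsep ⟨d, hd, hdκ⟩ ⟨c, hc, hcκ⟩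
  obtain ⟨hPB, hPA⟩ := hab.2 n
  rw [dist_zero_left] at hdκ hcκ
  have ha := hPA.norm_le_add (hAcv _) hd
  have hb := hPB.norm_le_add (hBcv _) hc
  rcases lt_or_ge ‖a n‖ (ρ / 2) with hsmall | hlarge
  · exact le_max_of_le_right (by linarith)
  have hκa : 12 * κ ≤ μ ^ 4 * ‖a n‖ := by
    simp only [κ]; nlinarith [mul_le_mul_of_nonneg_left hlarge (by positivity : 0 ≤ μ ^ 4)]
  have := hPB.norm_le_of_mul_norm_le (hBcv _) hc hcκ.le hμ0.le hμ1 hκa (hsep hlarge)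
  exact le_max_of_le_left (by nlinarith [mul_le_mul_of_nonneg_right hμ4 (norm_nonneg (a n))])

theorem tendsto_zero_of_stronglyExposes (hab : IsPerturbedAPS An Bn a₀ a b)
    (hexp : StronglyExposes f A 0) (hA : AWTendsto An A) (hB : AWTendsto Bn {x | 0 ≤ f x})
    (hAne : ∀ n, (An n).Nonempty) (hAcv : ∀ n, Convex ℝ (An n))
    (hBne : ∀ n, (Bn n).Nonempty) (hBcv : ∀ n, Convex ℝ (Bn n)) :
    Tendsto a atTop (𝓝 0) ∧ Tendsto b atTop (𝓝 0) := by
  have ha : Tendsto a atTop (𝓝 0) := tendsto_zero_iff_norm_tendsto_zero.2 <|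
    tendsto_zero_of_forall_eventually_le_max (fun _ => norm_nonneg _) fun _ hρ =>
      hab.eventually_norm_succ_le_max hexp hA hB hAne hAcv hBne hBcv hρ
  refine ⟨ha, (tendsto_add_atTop_iff_nat 1).1 (Metric.tendsto_nhds.2 fun ε hε => ?_)⟩
  filter_upwards [Metric.tendsto_nhds.1 ha (ε / 2) (half_pos hε),
    (tendsto_add_atTop_nat 1).eventually
      (hB.eventually_exists_dist_lt hBne (show (0 : X) ∈ {x | 0 ≤ f x} by simp)
        (show 0 < ε / 4 by positivity))] with n hn ⟨c, hc, hcε⟩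
  rw [dist_zero_right] at hn ⊢
  rw [dist_zero_left] at hcε
  linarith [(hab.2 n).1.norm_le_add (hBcv _) hc]

end IsPerturbedAPS

theorem stmt3_general {X : Type*} [NormedAddCommGroup X] [InnerProductSpace ℝ X] [CompleteSpace X]
    (A : Set X) (hAv : Convex ℝ A) (hAint : (interior A).Nonempty)
    (f : X →L[ℝ] ℝ) (hexp : StronglyExposes f A 0)
    (α : ℝ) (hα : α ≤ 0) :
    StablePair A {x : X | α ≤ f x} := by
  rcases hα.lt_or_eq with hα | rfl
  · refine stablePair_of_nonempty_interior_inter ?_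
    have hopen : IsOpen {x | α < f x} := isOpen_lt continuous_const f.continuous
    have h0 : (0 : X) ∈ closure (interior A) := by
      rw [hAv.closure_interior_eq_closure_of_nonempty_interior hAint]
      exact subset_closure hexp.1
    obtain ⟨e, he, heA⟩ := _root_.mem_closure_iff.1 h0 _ hopen (by simpa using hα)
    refine ⟨e, ?_⟩
    rw [interior_inter]
    exact ⟨heA, interior_maximal (fun x (hx : α < f x) => hx.le) hopen he⟩
  · intro An Bn hAn hBn hA hB a₀ a b hab
    obtain ⟨ha, hb⟩ := hab.tendsto_zero_of_stronglyExposes hexp hA hB (fun n => (hAn n).1)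
      (fun n => (hAn n).2.2) (fun n => (hBn n).1) (fun n => (hBn n).2.2)
    exact ⟨⟨0, ha⟩, 0, hb⟩

theorem stmt3 {X : Type*} [NormedAddCommGroup X] [InnerProductSpace ℝ X] [CompleteSpace X]
    (A : Set X) (hAc : IsClosed A) (hAv : Convex ℝ A) (hAint : (interior A).Nonempty)
    (h0 : (0 : X) ∈ frontier A)
    (f : X →L[ℝ] ℝ) (hf : f ≠ 0) (hexp : StronglyExposes f A 0)
    (α : ℝ) (hα : α ≤ 0) :
    StablePair A {x : X | α ≤ f x} :=
  stmt3_general A hAv hAint f hexp α hα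
end

section
/- Let A be a body in a normed space X (a closed convex set with nonempty interior) and suppose a ∈ ∂A is an LUR point of A. Then every support functional f ∈ S_{X*} for A at a (i.e., f(a) = sup f(A)) strongly exposes A at a. -/
open Filter Metric Topology

/-- `x` is an LUR (locally uniformly rotund) point of the body `A`. -/
def IsLURPoint {X : Type*} [NormedAddCommGroup X] [NormedSpace ℝ X]
    (A : Set X) (x : X) : Prop :=
  ∀ ε : ℝ, 0 < ε → ∃ δ : ℝ, 0 < δ ∧ ∀ y ∈ A,
    Metric.infDist ((2 : ℝ)⁻¹ • (x + y)) (frontier A) < δ → ‖x - y‖ < ε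

theorem stmt7 {X : Type*} [NormedAddCommGroup X] [NormedSpace ℝ X]
    (A : Set X) (hAc : IsClosed A) (hAv : Convex ℝ A) (hAint : (interior A).Nonempty)
    (a : X) (ha : a ∈ frontier A) (haLUR : IsLURPoint A a)
    (f : X →L[ℝ] ℝ) (hf : ‖f‖ = 1) (hsupp : ∀ x ∈ A, f x ≤ f a) :
    StronglyExposes f A a := by
  have haA : a ∈ A := hAc.closure_eq ▸ ha.1
  -- key lemma: for m ∈ A, infDist m (frontier A) ≤ f a - f m
  have key : ∀ m ∈ A, Metric.infDist m (frontier A) ≤ f a - f m := by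
    intro m hm
    by_contra h
    push_neg at h
    set d := Metric.infDist m (frontier A) with hd
    have hfm : f m ≤ f a := hsupp m hm
    have hd0 : 0 < d := lt_of_le_of_lt (by linarith) h
    set r : ℝ := (f a - f m + d) / 2 with hr
    have hr1 : f a - f m < r := by simp only [hr]; linarith
    have hr2 : r < d := by simp only [hr]; linarith
    have hr0 : 0 < r := by linarith
    -- ball m r misses the frontier
    have hball : ∀ p ∈ ball m r, p ∉ frontier A := by
      intro p hp hpf
      have := Metric.infDist_le_dist_of_mem (x := m) hpf
      rw [dist_comm] at this
      exact absurd (this.trans_lt (mem_ball.1 hp)) (not_lt.2 hr2.le)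
    have hmint : m ∈ interior A := by
      have hmem : m ∈ closure A := subset_closure hm
      by_contra hmi
      exact hball m (mem_ball_self hr0) ⟨hmem, hmi⟩
    have hsub : ball m r ⊆ A := by
      have hconn : IsPreconnected (ball m r) :=
        (convex_ball m r).isPreconnected
      have : ball m r ⊆ interior A := by
        refine hconn.subset_left_of_subset_union isOpen_interior
          (isClosed_closure (s := A)).isOpen_compl ?_ ?_ ⟨m, mem_ball_self hr0, hmint⟩
        · exact Set.disjoint_left.2 fun x hx hx' => hx' (interior_subset_closure hx)
        · intro p hp
          rcases Classical.em (p ∈ closure A) with hc | hc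
          · exact Or.inl (Classical.byContradiction fun hi => hball p hp ⟨hc, hi⟩)
          · exact Or.inr hc
      exact this.trans interior_subset
    -- find a point in the ball with f-value above f a
    set c : ℝ := (f a - f m + r) / 2 with hc
    have hc1 : f a - f m < c := by simp only [hc]; linarith
    have hc2 : c < r := by simp only [hc]; linarith
    have hc0 : 0 < c := by linarith
    have hlt : c / r < ‖f‖ := by rw [hf]; rw [div_lt_one hr0]; exact hc2
    obtain ⟨v, hv1, hv2⟩ := f.exists_lt_apply_of_lt_opNorm hlt
    -- wlog f v > 0
    have hcr0 : 0 < c / r := div_pos hc0 hr0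
    obtain ⟨w, hw1, hw2⟩ : ∃ w : X, ‖w‖ < 1 ∧ c / r < f w := by
      rcases le_or_gt 0 (f v) with hfv | hfv
      · exact ⟨v, hv1, by rwa [Real.norm_eq_abs, abs_of_nonneg hfv] at hv2⟩
      · refine ⟨-v, by simpa using hv1, ?_⟩
        rw [map_neg]
        rwa [Real.norm_eq_abs, abs_of_neg hfv] at hv2
    have hfw0 : 0 < f w := lt_trans hcr0 hw2
    set p : X := m + (c / f w) • w with hp
    have hpA : p ∈ A := by
      apply hsub
      rw [mem_ball, dist_eq_norm]
      have : p - m = (c / f w) • w := by simp [hp]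
      rw [this, norm_smul, Real.norm_eq_abs, abs_of_pos (div_pos hc0 hfw0)]
      calc c / f w * ‖w‖ ≤ c / f w * 1 := by
            exact mul_le_mul_of_nonneg_left hw1.le (div_pos hc0 hfw0).le
        _ = c / f w := mul_one _
        _ < r := by
            rw [div_lt_iff₀ hfw0]
            calc c = c / r * r := by field_simp
              _ < f w * r := by exact mul_lt_mul_of_pos_right hw2 hr0
              _ = r * f w := mul_comm _ _
    have : f p = f m + c := by
      simp [hp, map_add, map_smul, smul_eq_mul]
      field_simp
    have := hsupp p hpA
    rw [‹f p = f m + c›] at this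
    linarith
  refine ⟨haA, hsupp, ?_⟩
  intro x hx hT
  rw [Metric.tendsto_atTop]
  intro ε hε
  obtain ⟨δ, hδ0, hδ⟩ := haLUR ε hε
  have h2δ : 0 < 2 * δ := by linarith
  rw [Metric.tendsto_atTop] at hT
  obtain ⟨N, hN⟩ := hT (2 * δ) h2δ
  refine ⟨N, fun n hn => ?_⟩
  have hxn := hx n
  have hmid : (2 : ℝ)⁻¹ • (a + x n) ∈ A := by
    have := hAv haA hxn (by norm_num : (0:ℝ) ≤ 2⁻¹) (by norm_num : (0:ℝ) ≤ 2⁻¹) (by norm_num)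
    simpa [smul_add] using this
  have hfmid : f ((2:ℝ)⁻¹ • (a + x n)) = 2⁻¹ * (f a + f (x n)) := by
    simp [map_smul, map_add, smul_eq_mul]; ring
  have hclose : |f (x n) - f a| < 2 * δ := by
    have := hN n hn
    rwa [Real.dist_eq] at this
  have hkey := key _ hmid
  have hlt : Metric.infDist ((2:ℝ)⁻¹ • (a + x n)) (frontier A) < δ := by
    have : f a - f ((2:ℝ)⁻¹ • (a + x n)) < δ := by
      rw [hfmid]
      have h1 : f a - f (x n) < 2 * δ := by
        have := abs_lt.1 hclose
        linarith [this.1]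
      linarith
    linarith
  have := hδ (x n) hxn hlt
  rw [dist_eq_norm, ← norm_neg]
  simpa [neg_sub] using this
end

section
/- Let X be a normed space, A a convex subset of X with 0 ∈ A, and f ∈ S_{X*} with f(0) = inf f(A). Let x₀ ∈ S_X satisfy f(x₀) = 1. Define ε : (0,1) → [0,∞] by ε(α) = inf{λ > 0 : A ⊂ C(f,α) − λx₀}, where C(f,α) = {x ∈ X : f(x) ≥ α‖x‖}. Then ε(α) = o(α) as α → 0⁺ if and only if (−f) strongly exposes A at 0. -/
open Filter Metric Topology
open scoped ENNReal

/-- The convex cone `C(f, α) = {x : f(x) ≥ α‖x‖}`. -/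
def coneC {X : Type*} [NormedAddCommGroup X] [NormedSpace ℝ X]
    (f : X →L[ℝ] ℝ) (α : ℝ) : Set X :=
  {x : X | α * ‖x‖ ≤ f x}

/-- `ε(α) = inf {λ > 0 : A ⊆ C(f,α) − λx₀}`, with value `∞` if no such `λ` exists. -/
noncomputable def epsFun {X : Type*} [NormedAddCommGroup X] [NormedSpace ℝ X]
    (A : Set X) (f : X →L[ℝ] ℝ) (x₀ : X) (α : ℝ) : ℝ≥0∞ :=
  sInf {l : ℝ≥0∞ | ∃ lam : ℝ, 0 < lam ∧ l = ENNReal.ofReal lam ∧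
    A ⊆ (fun c => c - lam • x₀) '' coneC f α}

set_option maxHeartbeats 2000000 in
theorem stmt8 {X : Type*} [NormedAddCommGroup X] [NormedSpace ℝ X]
    (A : Set X) (hAv : Convex ℝ A) (h0A : (0 : X) ∈ A)
    (f : X →L[ℝ] ℝ) (hf : ‖f‖ = 1) (hinf : ∀ x ∈ A, f 0 ≤ f x)
    (x₀ : X) (hx₀ : ‖x₀‖ = 1) (hfx₀ : f x₀ = 1) :
    (∀ c : ℝ, 0 < c → ∃ δ : ℝ, 0 < δ ∧ ∀ α ∈ Set.Ioo (0 : ℝ) 1, α < δ →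
        epsFun A f x₀ α < ENNReal.ofReal (c * α))
      ↔ StronglyExposes (-f) A 0 := by
  have hf0 : f 0 = 0 := map_zero f
  have hApos : ∀ x ∈ A, 0 ≤ f x := fun x hx => hf0 ▸ hinf x hx
  constructor
  · -- o(α) ⇒ strongly exposes
    intro h
    refine ⟨h0A, fun x hx => by simp [hApos x hx], ?_⟩
    intro x hxA hconv
    have hfx : Tendsto (fun n => f (x n)) atTop (nhds (0 : ℝ)) := by
      have h1 : Tendsto (fun n => -((-f) (x n))) atTop (nhds (-((-f) (0 : X)))) :=
        hconv.neg
      simpa using h1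
    rw [NormedAddCommGroup.tendsto_nhds_zero]
    intro ε hε
    obtain ⟨δ, hδ0, hδ⟩ := h (ε / 4) (by positivity)
    set α : ℝ := min δ 1 / 2 with hαdef
    have hα0 : 0 < α := by positivity
    have hα1 : α < 1 := by
      have : min δ 1 ≤ 1 := min_le_right _ _
      simp only [hαdef]; linarith
    have hαδ : α < δ := by
      have : min δ 1 ≤ δ := min_le_left _ _
      simp only [hαdef]; linarith
    have hlt := hδ α ⟨hα0, hα1⟩ hαδ
    rw [epsFun, sInf_lt_iff] at hlt
    obtain ⟨l, ⟨lam, hlam0, rfl, hsub⟩, hllt⟩ := hlt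
    have hlamlt : lam < ε / 4 * α := by
      rwa [ENNReal.ofReal_lt_ofReal_iff (by positivity)] at hllt
    -- bound : ∀ y ∈ A, ‖y‖ ≤ f y / α + ε / 2
    have hbound : ∀ y ∈ A, ‖y‖ ≤ f y / α + ε / 2 := by
      intro y hy
      obtain ⟨z, hz, hzy⟩ := hsub hy
      have hz' : α * ‖z‖ ≤ f z := hz
      have hyn : ‖y‖ ≤ ‖z‖ + lam := by
        rw [← hzy]
        calc ‖z - lam • x₀‖ ≤ ‖z‖ + ‖lam • x₀‖ := norm_sub_le _ _
          _ = ‖z‖ + lam := by rw [norm_smul, hx₀, Real.norm_eq_abs,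
              abs_of_pos hlam0, mul_one]
      have hfz : f z = f y + lam := by
        rw [← hzy]; simp [map_sub, map_smul, hfx₀]
      have h2 : α * ‖y‖ ≤ f y + lam + α * lam := by
        calc α * ‖y‖ ≤ α * (‖z‖ + lam) := by
              exact mul_le_mul_of_nonneg_left hyn hα0.le
          _ = α * ‖z‖ + α * lam := by ring
          _ ≤ f z + α * lam := by linarith
          _ = f y + lam + α * lam := by rw [hfz]
      have h3 : lam + α * lam ≤ ε / 2 * α := by nlinarith
      have h4 : f y / α + ε / 2 = (f y + ε / 2 * α) / α := by
        field_simp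
      rw [h4, le_div_iff₀ hα0]
      nlinarith [h2, h3]
    have hev : ∀ᶠ n in atTop, f (x n) < α * (ε / 4) :=
      hfx.eventually_lt_const (by positivity)
    filter_upwards [hev] with n hn
    have := hbound (x n) (hxA n)
    have hfxn : f (x n) / α < ε / 4 := by
      rw [div_lt_iff₀ hα0]; linarith [hn, mul_comm α (ε / 4)]
    linarith
  · -- strongly exposes ⇒ o(α)
    rintro ⟨-, hmax, hseq⟩
    have hkey : ∀ ε > (0:ℝ), ∃ η > (0:ℝ), ∀ x ∈ A, f x < η → ‖x‖ < ε := by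
      by_contra hcon
      push_neg at hcon
      obtain ⟨ε, hε, hcon⟩ := hcon
      choose x hxA hxf hxn using fun n : ℕ => hcon (1 / (n + 1)) (by positivity)
      have hfx0 : Tendsto (fun n => f (x n)) atTop (nhds (0:ℝ)) := by
        have h1 : Tendsto (fun n : ℕ => 1 / ((n : ℝ) + 1)) atTop (nhds 0) :=
          tendsto_one_div_add_atTop_nhds_zero_nat
        refine squeeze_zero (fun n => hApos _ (hxA n)) (fun n => (hxf n).le) h1
      have hx0 : Tendsto x atTop (nhds (0 : X)) := by
        refine hseq x hxA ?_
        have : Tendsto (fun n => -(f (x n))) atTop (nhds (-(0:ℝ))) := hfx0.neg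
        simpa using this
      have := (NormedAddCommGroup.tendsto_nhds_zero.mp hx0) ε hε
      obtain ⟨n, hn⟩ := this.exists
      exact absurd (hxn n) (not_le.mpr hn)
    intro c hc
    obtain ⟨η, hη0, hη⟩ := hkey (c / 4) (by positivity)
    refine ⟨min (η / (2 * (c / 4))) (1 / 2), by positivity, ?_⟩
    rintro α ⟨hα0, hα1⟩ hαδ
    have hαhalf : α < 1 / 2 := lt_of_lt_of_le hαδ (min_le_right _ _)
    have hαη : α < η / (2 * (c / 4)) := lt_of_lt_of_le hαδ (min_le_left _ _)
    obtain ⟨lam, hlamdef⟩ : ∃ lam : ℝ, lam = c * α / 2 := ⟨_, rfl⟩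
    have hlam0 : 0 < lam := by rw [hlamdef]; positivity
    have hsub : A ⊆ (fun z => z - lam • x₀) '' coneC f α := by
      intro x hx
      refine ⟨x + lam • x₀, ?_, add_sub_cancel_right x (lam • x₀)⟩
      have hfx : f (x + lam • x₀) = f x + lam := by
        simp [map_add, map_smul, hfx₀]
      have hnx : ‖x + lam • x₀‖ ≤ ‖x‖ + lam := by
        calc ‖x + lam • x₀‖ ≤ ‖x‖ + ‖lam • x₀‖ := norm_add_le _ _
          _ = ‖x‖ + lam := by rw [norm_smul, hx₀, Real.norm_eq_abs,
              abs_of_pos hlam0, mul_one]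
      -- norm bound on x : ‖x‖ ≤ c/4 + (2*(c/4)/η) * f x
      have hxb : ‖x‖ ≤ c / 4 + 2 * (c / 4) / η * f x := by
        rcases lt_or_ge (f x) η with hlt | hge
        · have h1 : ‖x‖ < c / 4 := hη x hx hlt
          have h2 : 0 ≤ 2 * (c / 4) / η * f x := by
            have := hApos x hx; positivity
          linarith
        · have hfxpos : 0 < f x := lt_of_lt_of_le hη0 hge
          set t : ℝ := η / (2 * f x) with htdef
          have ht0 : 0 < t := by positivity
          have ht1 : t ≤ 1 := by
            rw [htdef, div_le_one (by positivity)]; linarith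
          have htx : t • x ∈ A :=
            hAv.smul_mem_of_zero_mem h0A hx ⟨ht0.le, ht1⟩
          have hftx : f (t • x) = η / 2 := by
            have hne : f x ≠ 0 := hfxpos.ne'
            rw [map_smul, smul_eq_mul, htdef]
            field_simp
          have := hη (t • x) htx (by rw [hftx]; linarith)
          rw [norm_smul, Real.norm_eq_abs, abs_of_pos ht0] at this
          have h3 : ‖x‖ < (c / 4) / t := by
            rw [lt_div_iff₀ ht0, mul_comm]; exact this
          have h4 : (c / 4) / t = 2 * (c / 4) / η * f x := by
            rw [htdef]; field_simp
          have h5 : 0 < c / 4 := by positivity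
          linarith [h3, h4 ▸ h3]
      -- conclude cone membership
      show α * ‖x + lam • x₀‖ ≤ f (x + lam • x₀)
      rw [hfx]
      have hαsmall : α * (2 * (c / 4) / η) ≤ 1 := by
        rw [← le_div_iff₀ (by positivity)]
        calc α ≤ η / (2 * (c / 4)) := hαη.le
          _ = 1 / (2 * (c / 4) / η) := by field_simp
      have hfx0' : 0 ≤ f x := hApos x hx
      calc α * ‖x + lam • x₀‖ ≤ α * (‖x‖ + lam) :=
            mul_le_mul_of_nonneg_left hnx hα0.le
        _ ≤ α * (c / 4 + 2 * (c / 4) / η * f x + lam) := by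
            have := hxb; nlinarith
        _ ≤ f x + lam := by
            have hprod : 0 ≤ (1 - α * (2 * (c / 4) / η)) * f x :=
              mul_nonneg (by linarith) hfx0'
            have hlam' : α * (c / 4) + α * lam ≤ lam := by
              rw [hlamdef]
              nlinarith [mul_nonneg (mul_nonneg hc.le hα0.le)
                (by linarith : (0:ℝ) ≤ 1 / 2 - α)]
            linarith [hprod, hlam']
    have h1 : epsFun A f x₀ α ≤ ENNReal.ofReal lam := by
      rw [epsFun]
      exact sInf_le ⟨lam, hlam0, rfl, hsub⟩
    refine lt_of_le_of_lt h1 ?_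
    rw [ENNReal.ofReal_lt_ofReal_iff (by positivity), hlamdef]
    linarith
end
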